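/- In the Diestel-Leader graph DL(p,q), if x₁x₂ is a vertex with negative level (h₂(x₂) < 0), c₂ is a child of x₂ with ‖c₂‖₂ = ‖x₂‖₂ + 1, and b₁ is the parent of x₁, then b₁c₂ is adjacent to x₁x₂ and ‖b₁c₂‖ = ‖x₁x₂‖ + 1, where ‖·‖ denotes distance to the root o₁o₂. -/

import Mathlib

/-!
A walk in a Busemann tree that never drops below an ancestor `u` of its start stays among the
descendants of `u`; hence the lowest vertex of any walk from `x` to `y` is a common ancestor, the
geodesic from `x` to `y` descends to the highest common ancestor `z` (the confluent) and climbs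
back, and every walk from `x` to `y` reaches height `≤ h z`.

A walk in `DL(p,q)` therefore reaches the confluent height in the first tree and, since
`h₁ = -h₂` on vertices, minus the confluent height in the second; the first height moves by one
per step, so the walk is at least `d₁ + d₂ - |h₁ x₁ - h₁ y₁|` long. A zigzag walk (down in the
second tree to its confluent and up to `y₂`, then down in the first tree to its confluent and up
to `y₁`, each move paired with an arbitrary move in the other tree) attains this bound when
`h₁ y₁ ≤ h₁ x₁`.

With this distance formula, going from `a` to `b` changes `d₂` by `+1` and lowers the first height
`h₁ a₁ > 0` by one, so `‖b‖ = ‖a‖ + 2 + (d₁(b₁,o₁) - d₁(a₁,o₁))`. Both triangle inequalities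
(in `DL(p,q)` and in the first tree) then force `d₁(b₁,o₁) = d₁(a₁,o₁) - 1`.
-/

/-- A homogeneous tree with a Busemann (height) function `h` towards a fixed end:
the graph is connected and acyclic, every edge changes the height by exactly `1`,
every vertex has a unique neighbour of smaller height (its parent) and exactly `d`
neighbours of larger height (its children). -/
structure BusemannTree {V : Type*} (G : SimpleGraph V) (h : V → ℤ) (d : ℕ) : Prop where
  connected : G.Connected
  acyclic : G.IsAcyclic
  height_adj : ∀ x y, G.Adj x y → h y = h x + 1 ∨ h y = h x - 1
  parent_unique : ∀ x, ∃! y, G.Adj x y ∧ h y = h x - 1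
  children_card : ∀ x, {y | G.Adj x y ∧ h y = h x + 1}.ncard = d

/-- The Diestel--Leader graph: the horocyclic product of two trees. -/
def DLGraph {V₁ V₂ : Type*} (G₁ : SimpleGraph V₁) (G₂ : SimpleGraph V₂)
    (h₁ : V₁ → ℤ) (h₂ : V₂ → ℤ) :
    SimpleGraph {v : V₁ × V₂ // h₁ v.1 + h₂ v.2 = 0} where
  Adj a b := G₁.Adj a.1.1 b.1.1 ∧ G₂.Adj a.1.2 b.1.2
  symm := ⟨fun _ _ hab => ⟨G₁.adj_symm hab.1, G₂.adj_symm hab.2⟩⟩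
  loopless := ⟨fun _ hab => G₁.irrefl hab.1⟩

open SimpleGraph

namespace SimpleGraph.Walk

variable {V : Type*} {G : SimpleGraph V} {f : V → ℤ}

theorem abs_sub_le_length (hf : ∀ x y, G.Adj x y → |f x - f y| ≤ 1) :
    ∀ {x y : V} (W : G.Walk x y), |f x - f y| ≤ W.length
  | _, _, nil => by simp
  | x, y, cons (v := v) hxv W => by
    have hW := abs_sub_le_length hf W
    have hstep := hf _ _ hxv
    have := abs_sub_le (f x) (f v) (f y)
    rw [length_cons]
    push_cast
    linarith

theorem abs_sub_add_abs_sub_le_length (hf : ∀ x y, G.Adj x y → |f x - f y| ≤ 1) {x y u : V}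
    (W : G.Walk x y) (hu : u ∈ W.support) : |f x - f u| + |f u - f y| ≤ W.length := by
  classical
  have := abs_sub_le_length hf (W.takeUntil u hu)
  have := abs_sub_le_length hf (W.dropUntil u hu)
  rw [← W.take_spec hu, length_append]
  push_cast
  linarith

theorem two_mul_abs_sub_le_length_add (hf : ∀ x y, G.Adj x y → |f x - f y| ≤ 1) {x y u v : V}
    (W : G.Walk x y) (hu : u ∈ W.support) (hv : v ∈ W.support) :
    2 * |f u - f v| ≤ W.length + |f x - f y| := by
  classical
  have hyx := abs_sub_comm (f y) (f x)
  have hvu := abs_sub_comm (f v) (f u)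
  rw [← W.take_spec hu, mem_support_append_iff] at hv
  rw [← W.take_spec hu, length_append]
  push_cast
  rcases hv with hv | hv
  · have := abs_sub_add_abs_sub_le_length hf _ hv
    have := abs_sub_le_length hf (W.dropUntil u hu)
    have := abs_sub_le (f u) (f y) (f v)
    have := abs_sub_le (f y) (f x) (f v)
    linarith
  · have := abs_sub_le_length hf (W.takeUntil u hu)
    have := abs_sub_add_abs_sub_le_length hf _ hv
    have := abs_sub_le (f u) (f x) (f v)
    have := abs_sub_le (f x) (f y) (f v)
    have := abs_sub_comm (f u) (f x)
    have := abs_sub_comm (f y) (f v)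
    linarith

end SimpleGraph.Walk

namespace BusemannTree

variable {V : Type*} {G : SimpleGraph V} {h : V → ℤ} {d : ℕ} (hT : BusemannTree G h d)

noncomputable def parent (x : V) : V :=
  (hT.parent_unique x).exists.choose

theorem adj_parent (x : V) : G.Adj x (hT.parent x) :=
  (hT.parent_unique x).exists.choose_spec.1

theorem height_parent (x : V) : h (hT.parent x) = h x - 1 :=
  (hT.parent_unique x).exists.choose_spec.2

theorem eq_parent {x y : V} (hxy : G.Adj x y) (hy : h y = h x - 1) : y = hT.parent x :=
  (hT.parent_unique x).unique ⟨hxy, hy⟩ ⟨hT.adj_parent x, hT.height_parent x⟩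

theorem parent_eq_of_adj {x y : V} (hxy : G.Adj x y) (hy : h y = h x + 1) :
    hT.parent y = x :=
  (hT.eq_parent hxy.symm (by omega)).symm

theorem height_iterate_parent (n : ℕ) (x : V) : h (hT.parent^[n] x) = h x - n := by
  induction n with
  | zero => simp
  | succ n ih =>
    rw [Function.iterate_succ_apply', hT.height_parent, ih]
    push_cast
    ring

include hT in
theorem abs_height_sub_le {x y : V} (hxy : G.Adj x y) : |h x - h y| ≤ 1 := by
  rcases hT.height_adj x y hxy with hy | hy <;> rw [hy] <;> norm_num

theorem exists_walk_iterate_parent (n : ℕ) (x : V) :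
    ∃ W : G.Walk x (hT.parent^[n] x), W.length = n := by
  induction n with
  | zero => exact ⟨.nil, rfl⟩
  | succ n ih =>
    obtain ⟨W, hW⟩ := ih
    refine ⟨(W.concat (hT.adj_parent _)).copy rfl (Function.iterate_succ_apply' _ n x).symm, ?_⟩
    rw [Walk.length_copy, Walk.length_concat, hW]

theorem exists_iterate_parent_eq (hd : d ≠ 0) (n : ℕ) (x : V) :
    ∃ y, hT.parent^[n] y = x := by
  induction n with
  | zero => exact ⟨x, rfl⟩
  | succ n ih =>
    obtain ⟨y, hy⟩ := ih
    obtain ⟨c, hyc, hc⟩ : {c | G.Adj y c ∧ h c = h y + 1}.Nonempty :=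
      Set.nonempty_of_ncard_ne_zero (by rw [hT.children_card]; exact hd)
    exact ⟨c, by rw [Function.iterate_succ_apply, hT.parent_eq_of_adj hyc hc, hy]⟩

theorem exists_iterate_parent_eq_of_walk {u : V} :
    ∀ {x y : V} (W : G.Walk x y), (∀ v ∈ W.support, h u ≤ h v) →
      (∃ n, hT.parent^[n] x = u) → ∃ n, hT.parent^[n] y = u
  | _, _, .nil, _, hx => hx
  | x, _, .cons (v := v) hxv W, hW, ⟨n, hn⟩ => by
    refine exists_iterate_parent_eq_of_walk W (fun w hw => hW w (by simp [hw])) ?_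
    rcases hT.height_adj x v hxv with hv | hv
    · exact ⟨n + 1, by rw [Function.iterate_succ_apply, hT.parent_eq_of_adj hxv hv, hn]⟩
    · cases n with
      | zero =>
        have := hW v (by simp)
        rw [Function.iterate_zero_apply] at hn
        subst hn
        omega
      | succ n => exact ⟨n, by rwa [hT.eq_parent hxv hv, ← Function.iterate_succ_apply]⟩

theorem exists_mem_support_iterate_parent_eq {x y : V} (W : G.Walk x y) :
    ∃ u ∈ W.support, (∃ m, hT.parent^[m] x = u) ∧ ∃ n, hT.parent^[n] y = u := by
  classical
  obtain ⟨u, hu, hmin⟩ := W.support.toFinset.exists_min_image h ⟨x, by simp⟩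
  rw [List.mem_toFinset] at hu
  have hmin' {a b : V} (W' : G.Walk a b) (hW' : W'.support ⊆ W.support) :
      ∀ v ∈ W'.support, h u ≤ h v :=
    fun v hv => hmin v (List.mem_toFinset.2 (hW' hv))
  refine ⟨u, hu, ?_, ?_⟩
  · exact hT.exists_iterate_parent_eq_of_walk (W.takeUntil u hu).reverse
      (hmin' _ (by simpa using W.support_takeUntil_subset_support hu)) ⟨0, rfl⟩
  · exact hT.exists_iterate_parent_eq_of_walk (W.dropUntil u hu)
      (hmin' _ (W.support_dropUntil_subset_support hu)) ⟨0, rfl⟩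

theorem exists_iterate_parent_eq_dist (x y : V) :
    ∃ k l : ℕ, hT.parent^[k] x = hT.parent^[l] y ∧ G.dist x y = k + l ∧
      ∀ W : G.Walk x y, ∃ u ∈ W.support, h u ≤ h x - k := by
  classical
  have hex : ∃ k l, hT.parent^[k] x = hT.parent^[l] y := by
    obtain ⟨W⟩ := hT.connected x y
    obtain ⟨u, -, ⟨m, hm⟩, n, hn⟩ := hT.exists_mem_support_iterate_parent_eq W
    exact ⟨m, n, hm.trans hn.symm⟩
  obtain ⟨l, hkl⟩ := Nat.find_spec hex
  set k := Nat.find hex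
  have hlow (W : G.Walk x y) : ∃ u ∈ W.support, h u ≤ h x - k := by
    obtain ⟨u, hu, ⟨m, hm⟩, n, hn⟩ := hT.exists_mem_support_iterate_parent_eq W
    have hkm : k ≤ m := Nat.find_min' hex ⟨n, hm.trans hn.symm⟩
    refine ⟨u, hu, ?_⟩
    rw [← hm, hT.height_iterate_parent]
    omega
  refine ⟨k, l, hkl, le_antisymm ?_ ?_, hlow⟩
  · obtain ⟨Wx, hWx⟩ := hT.exists_walk_iterate_parent k x
    obtain ⟨Wy, hWy⟩ := hT.exists_walk_iterate_parent l y
    calc G.dist x y ≤ (Wx.append (Wy.reverse.copy hkl.symm rfl)).length := dist_le _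
      _ = k + l := by simp [hWx, hWy]
  · obtain ⟨W, hW⟩ := hT.connected.exists_walk_length_eq_dist x y
    obtain ⟨u, hu, hux⟩ := hlow W
    have hheight := congrArg h hkl
    rw [hT.height_iterate_parent, hT.height_iterate_parent] at hheight
    have hlen := W.abs_sub_add_abs_sub_le_length (fun _ _ => hT.abs_height_sub_le) hu
    have := le_abs_self (h x - h u)
    have := neg_abs_le (h u - h y)
    rw [← hW]
    zify
    linarith

end BusemannTree

abbrev DLVertex {V₁ V₂ : Type*} (h₁ : V₁ → ℤ) (h₂ : V₂ → ℤ) :=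
  {v : V₁ × V₂ // h₁ v.1 + h₂ v.2 = 0}

namespace DLGraph

variable {V₁ V₂ : Type*} {G₁ : SimpleGraph V₁} {G₂ : SimpleGraph V₂} {h₁ : V₁ → ℤ} {h₂ : V₂ → ℤ}

def swap : DLGraph G₁ G₂ h₁ h₂ ≃g DLGraph G₂ G₁ h₂ h₁ where
  toFun v := ⟨v.1.swap, by rw [add_comm]; exact v.2⟩
  invFun v := ⟨v.1.swap, by rw [add_comm]; exact v.2⟩
  left_inv _ := rfl
  right_inv _ := rfl
  map_rel_iff' := and_comm

def fst : DLGraph G₁ G₂ h₁ h₂ →g G₁ := ⟨fun v => v.1.1, And.left⟩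

def snd : DLGraph G₁ G₂ h₁ h₂ →g G₂ := ⟨fun v => v.1.2, And.right⟩

@[simp] theorem fst_apply (v : DLVertex h₁ h₂) : (fst : DLGraph G₁ G₂ h₁ h₂ →g G₁) v = v.1.1 := rfl

@[simp] theorem snd_apply (v : DLVertex h₁ h₂) : (snd : DLGraph G₁ G₂ h₁ h₂ →g G₂) v = v.1.2 := rfl

variable {p q : ℕ} (hT₁ : BusemannTree G₁ h₁ p) (hT₂ : BusemannTree G₂ h₂ q)

theorem exists_walk_of_iterate_parent_eq : ∀ (n : ℕ) {y₁ : V₁} (v : DLVertex h₁ h₂),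
    hT₁.parent^[n] y₁ = v.1.1 →
    ∃ (w : DLVertex h₁ h₂) (W : (DLGraph G₁ G₂ h₁ h₂).Walk v w),
      W.length = n ∧ w.1.1 = y₁ ∧ w.1.2 = hT₂.parent^[n] v.1.2
  | 0, _, v, hy => ⟨v, .nil, rfl, hy.symm, rfl⟩
  | n + 1, y₁, v, hy => by
    obtain ⟨u, W, hlen, hu₁, hu₂⟩ := exists_walk_of_iterate_parent_eq n (y₁ := hT₁.parent y₁) v
      (by rwa [← Function.iterate_succ_apply])
    let w : DLVertex h₁ h₂ := ⟨(y₁, hT₂.parent u.1.2), by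
      have := u.2
      rw [hu₁, hT₁.height_parent] at this
      rw [hT₂.height_parent]
      dsimp only
      omega⟩
    have huw : (DLGraph G₁ G₂ h₁ h₂).Adj u w := ⟨hu₁ ▸ (hT₁.adj_parent y₁).symm, hT₂.adj_parent _⟩
    exact ⟨w, W.concat huw, by simp [hlen], rfl, by simp [w, hu₂, Function.iterate_succ_apply']⟩

theorem exists_walk_of_iterate_parent_eq' (n : ℕ) {y₂ : V₂} (v : DLVertex h₁ h₂)
    (hy : hT₂.parent^[n] y₂ = v.1.2) :
    ∃ (w : DLVertex h₁ h₂) (W : (DLGraph G₁ G₂ h₁ h₂).Walk v w),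
      W.length = n ∧ w.1.2 = y₂ ∧ w.1.1 = hT₁.parent^[n] v.1.1 := by
  obtain ⟨w, W, hlen, hw₂, hw₁⟩ := exists_walk_of_iterate_parent_eq hT₂ hT₁ n (swap v) hy
  exact ⟨swap.symm w, (W.map swap.symm.toHom).copy (swap.symm_apply_apply v) rfl,
    by rw [Walk.length_copy, Walk.length_map, hlen], hw₂, hw₁⟩

theorem exists_walk_zigzag {k l : ℕ} {y₁ : V₁} {y₂ : V₂} (v : DLVertex h₁ h₂)
    (hy₁ : hT₁.parent^[k] y₁ = v.1.1) (hy₂ : hT₂.parent^[k] v.1.2 = hT₂.parent^[l] y₂) :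
    ∃ (w : DLVertex h₁ h₂) (W : (DLGraph G₁ G₂ h₁ h₂).Walk v w),
      W.length = k + l ∧ w.1.1 = hT₁.parent^[l] y₁ ∧ w.1.2 = y₂ := by
  obtain ⟨u, W₁, hlen₁, hu₁, hu₂⟩ := exists_walk_of_iterate_parent_eq hT₁ hT₂ k v hy₁
  obtain ⟨w, W₂, hlen₂, hw₂, hw₁⟩ :=
    exists_walk_of_iterate_parent_eq' hT₁ hT₂ l u (hu₂.trans hy₂).symm
  exact ⟨w, W₁.append W₂, by rw [Walk.length_append, hlen₁, hlen₂], by rw [hw₁, hu₁], hw₂⟩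

theorem exists_walk_zigzag' {k l : ℕ} {y₁ : V₁} {y₂ : V₂} (v : DLVertex h₁ h₂)
    (hy₂ : hT₂.parent^[k] y₂ = v.1.2) (hy₁ : hT₁.parent^[k] v.1.1 = hT₁.parent^[l] y₁) :
    ∃ (w : DLVertex h₁ h₂) (W : (DLGraph G₁ G₂ h₁ h₂).Walk v w),
      W.length = k + l ∧ w.1.2 = hT₂.parent^[l] y₂ ∧ w.1.1 = y₁ := by
  obtain ⟨w, W, hlen, hw₂, hw₁⟩ := exists_walk_zigzag hT₂ hT₁ (swap v) hy₂ hy₁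
  exact ⟨swap.symm w, (W.map swap.symm.toHom).copy (swap.symm_apply_apply v) rfl,
    by rw [Walk.length_copy, Walk.length_map, hlen], hw₂, hw₁⟩

include hT₁ hT₂ in
theorem exists_walk_length_eq (hp : p ≠ 0) (hq : q ≠ 0) (x y : DLVertex h₁ h₂) :
    ∃ W : (DLGraph G₁ G₂ h₁ h₂).Walk x y,
      (W.length : ℤ) = G₁.dist x.1.1 y.1.1 + G₂.dist x.1.2 y.1.2 - (h₁ x.1.1 - h₁ y.1.1) := by
  obtain ⟨k₁, l₁, hz₁, hd₁, -⟩ := hT₁.exists_iterate_parent_eq_dist x.1.1 y.1.1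
  obtain ⟨k₂, l₂, hz₂, hd₂, -⟩ := hT₂.exists_iterate_parent_eq_dist x.1.2 y.1.2
  have hh₁ := congrArg h₁ hz₁
  have hh₂ := congrArg h₂ hz₂
  rw [hT₁.height_iterate_parent, hT₁.height_iterate_parent] at hh₁
  rw [hT₂.height_iterate_parent, hT₂.height_iterate_parent] at hh₂
  have hx := x.2
  have hy := y.2
  have hkl : l₁ + l₂ = k₁ + k₂ := by omega
  -- `k₂ + l₂` steps to the second coordinate `y₂`, then `l₁ + l₁` steps to the first one `y₁`
  obtain ⟨y₁, hy₁⟩ := hT₁.exists_iterate_parent_eq hp k₂ x.1.1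
  obtain ⟨u, W₁, hlen₁, hu₁, hu₂⟩ := exists_walk_zigzag hT₁ hT₂ x hy₁ hz₂
  obtain ⟨y₂, hy₂⟩ := hT₂.exists_iterate_parent_eq hq l₁ y.1.2
  obtain ⟨w, W₂, hlen₂, hw₂, hw₁⟩ := exists_walk_zigzag' hT₁ hT₂ u (hy₂.trans hu₂.symm)
    (y₁ := y.1.1)
    (by rw [hu₁, ← Function.iterate_add_apply, hkl, Function.iterate_add_apply, hy₁, hz₁])
  obtain rfl : w = y := Subtype.ext (Prod.ext hw₁ (hw₂.trans hy₂))
  refine ⟨W₁.append W₂, ?_⟩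
  rw [Walk.length_append, hlen₁, hlen₂, hd₁, hd₂]
  push_cast
  omega

include hT₁ hT₂ in
theorem le_length {x y : DLVertex h₁ h₂} (W : (DLGraph G₁ G₂ h₁ h₂).Walk x y) :
    (G₁.dist x.1.1 y.1.1 : ℤ) + G₂.dist x.1.2 y.1.2 - |h₁ x.1.1 - h₁ y.1.1| ≤ W.length := by
  obtain ⟨k₁, l₁, hz₁, hd₁, hlow₁⟩ := hT₁.exists_iterate_parent_eq_dist x.1.1 y.1.1
  obtain ⟨k₂, l₂, hz₂, hd₂, hlow₂⟩ := hT₂.exists_iterate_parent_eq_dist x.1.2 y.1.2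
  have hh₁ := congrArg h₁ hz₁
  have hh₂ := congrArg h₂ hz₂
  rw [hT₁.height_iterate_parent, hT₁.height_iterate_parent] at hh₁
  rw [hT₂.height_iterate_parent, hT₂.height_iterate_parent] at hh₂
  obtain ⟨u₁, hu₁, hu₁low⟩ := hlow₁ ((W.map fst).copy (fst_apply x) (fst_apply y))
  obtain ⟨u₂, hu₂, hu₂low⟩ := hlow₂ ((W.map snd).copy (snd_apply x) (snd_apply y))
  rw [Walk.support_copy, Walk.support_map, List.mem_map] at hu₁ hu₂
  obtain ⟨U, hU, rfl⟩ := hu₁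
  obtain ⟨Z, hZ, rfl⟩ := hu₂
  have hUZ := W.two_mul_abs_sub_le_length_add (f := fun v => h₁ v.1.1)
    (fun _ _ hadj => hT₁.abs_height_sub_le (fst.map_adj hadj)) hU hZ
  have := neg_abs_le (h₁ U.1.1 - h₁ Z.1.1)
  have hx := x.2
  have hy := y.2
  have hZ := Z.2
  rw [fst_apply] at hu₁low
  rw [snd_apply] at hu₂low
  rw [hd₁, hd₂]
  push_cast
  linarith

include hT₁ hT₂ in
theorem dist_eq (hp : p ≠ 0) (hq : q ≠ 0) (x y : DLVertex h₁ h₂) :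
    ((DLGraph G₁ G₂ h₁ h₂).dist x y : ℤ) =
      G₁.dist x.1.1 y.1.1 + G₂.dist x.1.2 y.1.2 - |h₁ x.1.1 - h₁ y.1.1| := by
  wlog hxy : h₁ y.1.1 ≤ h₁ x.1.1 generalizing x y
  · rw [dist_comm, G₁.dist_comm, G₂.dist_comm, abs_sub_comm]
    exact this y x (by omega)
  obtain ⟨W, hW⟩ := exists_walk_length_eq hT₁ hT₂ hp hq x y
  obtain ⟨W', hW'⟩ := W.reachable.exists_walk_length_eq_dist
  have hle := dist_le W
  have hge := le_length hT₁ hT₂ W'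
  rw [abs_of_nonneg (sub_nonneg.2 hxy)] at hge ⊢
  rw [hW'] at hge
  omega

end DLGraph

/-- In `DL(p,q)`, if `x₁x₂` has negative level, `c₂` is a child of `x₂` with
`‖c₂‖₂ = ‖x₂‖₂ + 1`, and `b₁` is the parent of `x₁`, then `b₁c₂` is adjacent to
`x₁x₂` and `‖b₁c₂‖ = ‖x₁x₂‖ + 1` (distances to the root `o₁o₂`). -/
theorem DL_step_up_at_negative_level {V₁ V₂ : Type*}
    (G₁ : SimpleGraph V₁) (G₂ : SimpleGraph V₂)
    (h₁ : V₁ → ℤ) (h₂ : V₂ → ℤ) (p q : ℕ) (hp : 2 ≤ p) (hq : 2 ≤ q)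
    (hT₁ : BusemannTree G₁ h₁ p) (hT₂ : BusemannTree G₂ h₂ q)
    (o a b : {v : V₁ × V₂ // h₁ v.1 + h₂ v.2 = 0})
    (ho : h₁ o.1.1 = 0)
    (hlevel : h₂ a.1.2 < 0)
    (hparent : G₁.Adj a.1.1 b.1.1 ∧ h₁ b.1.1 = h₁ a.1.1 - 1)
    (hchild : G₂.Adj a.1.2 b.1.2 ∧ h₂ b.1.2 = h₂ a.1.2 + 1)
    (hnorm : G₂.dist b.1.2 o.1.2 = G₂.dist a.1.2 o.1.2 + 1) :
    (DLGraph G₁ G₂ h₁ h₂).Adj a b ∧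
      (DLGraph G₁ G₂ h₁ h₂).dist b o = (DLGraph G₁ G₂ h₁ h₂).dist a o + 1 := by
  have hab : (DLGraph G₁ G₂ h₁ h₂).Adj a b := ⟨hparent.1, hchild.1⟩
  refine ⟨hab, ?_⟩
  have ha := a.2
  have hao := DLGraph.dist_eq hT₁ hT₂ (by omega) (by omega) a o
  have hbo := DLGraph.dist_eq hT₁ hT₂ (by omega) (by omega) b o
  rw [ho, sub_zero, abs_of_nonneg (by omega)] at hao hbo
  have hDL := hab.symm.reachable.dist_triangle_left o
  have htree := hparent.1.reachable.dist_triangle_left o.1.1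
  rw [dist_eq_one_iff_adj.2 hab.symm] at hDL
  rw [dist_eq_one_iff_adj.2 hparent.1] at htree
  omega
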